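/- arXiv:2309.15997 — 5 statements merged into one kernel-verified Lean document; each statement's English description precedes it below -/
import Mathlib

section
/- For every ω ∈ [ω̲, ω̄] there exists a unique y ∈ [0, min{κ, q}] satisfying the adaptive-priority-mechanism fixed-point equation y = min{ κ·(1 − max{ω − γ(1−βy), 0}), q }, and this unique solution equals κ(1+γ−ω)/(1+κγβ). -/
/-!
The right-hand side of the fixed-point equation is antitone in `y` (a larger minority intake
lowers the priority boost `γ(1 - βy)`), so it has at most one fixed point. The regularity
condition forces the majority score to stay above the boosted threshold and the intake to stay
below capacity, so at the candidate `y = κ(1+γ-ω)/(1+κγβ)` both `max` and `min` are inactive and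
the equation becomes the linear identity `y = κ(1 - ω + γ(1 - βy))`.
-/

open Function

theorem Antitone.eq_of_isFixedPt {α : Type*} [LinearOrder α] {f : α → α} (hf : Antitone f)
    {x y : α} (hx : IsFixedPt f x) (hy : IsFixedPt f y) : x = y := by
  rcases le_total x y with h | h
  · have := hf h
    rw [hx, hy] at this
    exact le_antisymm h this
  · have := hf h
    rw [hx, hy] at this
    exact le_antisymm this h

theorem div_one_div_add_eq_mul_div {κ : ℝ} (hκ : κ ≠ 0) (a c : ℝ) :
    a / (1 / κ + c) = κ * a / (1 + κ * c) := by
  rw [div_add' _ _ _ hκ, div_div_eq_mul_div]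
  ring

/-- Minority students (scores uniform on `[0, 1]`, mass `κ`) are admitted when their score beats
the majority score `ω` lowered by the boost `γ(1 - βy)` earned at intake `y`, up to capacity `q`. -/
def admittedMinority (κ q γ β ω y : ℝ) : ℝ :=
  min (κ * (1 - max (ω - γ * (1 - β * y)) 0)) q

theorem admittedMinority_antitone {κ γ β : ℝ} (hκ : 0 ≤ κ) (hγβ : 0 ≤ γ * β) (q ω : ℝ) :
    Antitone (admittedMinority κ q γ β ω) := by
  intro a b hab
  have hboost : ω - γ * (1 - β * a) ≤ ω - γ * (1 - β * b) := by
    linarith [mul_le_mul_of_nonneg_left hab hγβ]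
  have hmax := max_le_max_right 0 hboost
  exact min_le_min_right q (by linarith [mul_le_mul_of_nonneg_left hmax hκ])

theorem isFixedPt_admittedMinority {κ q γ β ω : ℝ} (hd : 0 < 1 + κ * γ * β)
    (hthr : γ - ω ≤ κ * γ * β) (hq : κ * (1 + γ - ω) / (1 + κ * γ * β) ≤ q) :
    IsFixedPt (admittedMinority κ q γ β ω) (κ * (1 + γ - ω) / (1 + κ * γ * β)) := by
  set s := κ * (1 + γ - ω) / (1 + κ * γ * β)
  have hs_mul : s * (1 + κ * γ * β) = κ * (1 + γ - ω) := div_mul_cancel₀ _ hd.ne'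
  have hboost : 0 ≤ ω - γ * (1 - β * s) := by
    have hprod : (ω - γ * (1 - β * s)) * (1 + κ * γ * β) = ω - γ + κ * γ * β := by
      linear_combination (γ * β) * hs_mul
    exact nonneg_of_mul_nonneg_left (by linarith) hd
  have hlin : κ * (1 - (ω - γ * (1 - β * s))) = s := by linear_combination -hs_mul
  rw [IsFixedPt, admittedMinority, max_eq_left hboost, hlin, min_eq_left hq]

theorem stmt_1_general (q κ γ β ωl ωh : ℝ)
    (hκ : 0 < κ) (hγ : 0 ≤ γ) (hβ : 0 ≤ β)
    (hωh : ωh ≤ 1)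
    (hreg1 : (1 + γ - ωl)/(1/κ + γ*β) + κ*(ωh - ωl) < min κ q) :
    ∀ ω ∈ Set.Icc ωl ωh,
      (∃! y : ℝ, y ∈ Set.Icc (0:ℝ) (min κ q) ∧
        y = min (κ * (1 - max (ω - γ*(1 - β*y)) 0)) q) ∧
      (∀ y : ℝ, (y ∈ Set.Icc (0:ℝ) (min κ q) ∧
          y = min (κ * (1 - max (ω - γ*(1 - β*y)) 0)) q) →
        y = κ*(1+γ-ω)/(1+κ*γ*β)) := by
  rintro ω ⟨hωl_le, hω_le⟩
  rw [div_one_div_add_eq_mul_div hκ.ne', ← mul_assoc] at hreg1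
  have hd : 0 < 1 + κ * γ * β := by positivity
  have hspread : 0 ≤ κ * (ωh - ωl) := mul_nonneg hκ.le (by linarith)
  have hs_le : κ * (1 + γ - ω) / (1 + κ * γ * β) ≤ κ * (1 + γ - ωl) / (1 + κ * γ * β) :=
    div_le_div_of_nonneg_right (mul_le_mul_of_nonneg_left (by linarith) hκ.le) hd.le
  have hs_lt : κ * (1 + γ - ω) / (1 + κ * γ * β) < min κ q := by linarith
  have hs_nonneg : 0 ≤ κ * (1 + γ - ω) / (1 + κ * γ * β) :=
    div_nonneg (mul_nonneg hκ.le (by linarith)) hd.le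
  have hthr : γ - ω ≤ κ * γ * β := by
    have hlt : κ * (1 + γ - ωl) / (1 + κ * γ * β) < κ := by linarith [min_le_left κ q]
    rw [div_lt_iff₀ hd] at hlt
    linarith [lt_of_mul_lt_mul_left hlt hκ.le]
  have hfix := isFixedPt_admittedMinority hd hthr (hs_lt.le.trans (min_le_right κ q))
  have huniq : ∀ y, y = admittedMinority κ q γ β ω y → y = κ * (1 + γ - ω) / (1 + κ * γ * β) :=
    fun y hy => (admittedMinority_antitone hκ.le (mul_nonneg hγ hβ) q ω).eq_of_isFixedPt hy.symm hfix
  exact ⟨⟨_, ⟨⟨hs_nonneg, hs_lt.le⟩, hfix.symm⟩, fun y hy => huniq y hy.2⟩, fun y hy => huniq y hy.2⟩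

/-- For every ω ∈ [ω̲, ω̄] there exists a unique y ∈ [0, min{κ, q}] satisfying the
adaptive-priority-mechanism fixed-point equation
`y = min{ κ·(1 − max{ω − γ(1−βy), 0}), q }`, and this unique solution equals
`κ(1+γ−ω)/(1+κγβ)`. -/
theorem stmt_1 (q κ γ β ωl ωh : ℝ)
    (hq0 : 0 < q) (hq1 : q ≤ 1) (hκ : 0 < κ) (hγ : 0 ≤ γ) (hβ : 0 ≤ β)
    (hωl : 0 ≤ ωl) (hωlt : ωl < ωh) (hωh : ωh ≤ 1)
    (hreg1 : (1 + γ - ωl)/(1/κ + γ*β) + κ*(ωh - ωl) < min κ q)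
    (hreg2 : κ*(1 - ωl) < (1 + γ - ωh)/(1/κ + γ*β)) :
    ∀ ω ∈ Set.Icc ωl ωh,
      (∃! y : ℝ, y ∈ Set.Icc (0:ℝ) (min κ q) ∧
        y = min (κ * (1 - max (ω - γ*(1 - β*y)) 0)) q) ∧
      (∀ y : ℝ, (y ∈ Set.Icc (0:ℝ) (min κ q) ∧
          y = min (κ * (1 - max (ω - γ*(1 - β*y)) 0)) q) →
        y = κ*(1+γ-ω)/(1+κ*γ*β)) :=
  stmt_1_general q κ γ β ωl ωh hκ hγ hβ hωh hreg1
end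

section
/- Define the quota value function 𝒰_Q(Q) = ∫ U( min{ max{Q, κ(1−ω)}, min{κ,q} }, ω) dΛ(ω) for Q ∈ [0, min{κ,q}]. Then Q* := (1+γ−E[ω])/(1/κ+γβ) satisfies κ(1−ω̲) < Q* < min{κ,q}, Q* maximizes 𝒰_Q over [0, min{κ,q}], and the optimal quota value is V_Q := 𝒰_Q(Q*) = q·E[ω] + (1+γ−E[ω])·Q* − (1/2)(1/κ+γβ)·Q*². -/
open Set MeasureTheory

/-!
On the support `[ωl, ωh]` every quota `Q` is weakly dominated by `max Q (κ(1-ωl))`: below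
`κ(1-ωl)` the admitted measure never exceeds `κ(1-ωl)`, and by the second regularity condition
`κ(1-ωl)` lies below the vertex `(1+γ-ω)/(1/κ+γβ)` of the concave payoff `U(·, ω)` for every `ω`
in the support. For quotas `y ∈ [κ(1-ωl), min{κ,q}]` the constraint `κ(1-ω)` never binds, so the
admitted measure is `y` itself and `𝒰_Q(y)` is the concave quadratic
`q E[ω] + (1+γ-E[ω]) y - ½(1/κ+γβ) y²`, maximized at its vertex `Q*`. The regularity conditions,
together with `ωl ≤ E[ω] ≤ ωh`, put `Q*` inside that interval.
-/

/-- Authority payoff. -/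
noncomputable def U (q κ γ β x ω : ℝ) : ℝ :=
  q * ω + (1 + γ - ω) * x - (1/2) * (1/κ + γ*β) * x^2

/-- Mean of ω under Λ. -/
noncomputable def Emean (Λ : Measure ℝ) : ℝ := ∫ ω, ω ∂Λ

/-- Value of the quota policy Q (processed first), which admits the
highest-scoring measure `min{max{Q, κ(1−ω)}, min{κ,q}}` of minority students. -/
noncomputable def UQ (q κ γ β : ℝ) (Λ : Measure ℝ) (Q : ℝ) : ℝ :=
  ∫ ω, U q κ γ β (min (max Q (κ*(1-ω))) (min κ q)) ω ∂Λ

lemma integrable_of_ae_mem_Icc {μ : Measure ℝ} [IsFiniteMeasure μ] {a b : ℝ} {f : ℝ → ℝ}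
    (hf : Continuous f) (h : ∀ᵐ x ∂μ, x ∈ Icc a b) : Integrable f μ := by
  rw [← Measure.restrict_eq_self_of_ae_mem h]
  exact hf.integrableOn_Icc

lemma quadratic_le_vertex {c : ℝ} (hc : 0 < c) (A y : ℝ) :
    A * y - (1/2) * c * y^2 ≤ A * (A/c) - (1/2) * c * (A/c)^2 := by
  obtain ⟨v, rfl⟩ : ∃ v, A = c * v := ⟨A/c, (mul_div_cancel₀ _ hc.ne').symm⟩
  rw [mul_div_cancel_left₀ _ hc.ne']
  nlinarith [mul_nonneg hc.le (sq_nonneg (v - y))]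

section Quota

variable {q κ γ β : ℝ}

lemma U_le_U_of_le {x y : ℝ} (ω : ℝ) (hc : 0 ≤ 1/κ + γ*β) (hxy : x ≤ y)
    (hy : (1/κ + γ*β) * y ≤ 1 + γ - ω) :
    U q κ γ β x ω ≤ U q κ γ β y ω := by
  unfold U
  nlinarith [mul_nonneg hc (sq_nonneg (y - x)),
    mul_nonneg (sub_nonneg.2 hxy) (sub_nonneg.2 hy)]

lemma admitted_eq_of_le {ωl ω y : ℝ} (hκ : 0 ≤ κ) (hω : ωl ≤ ω)
    (hy : κ*(1-ωl) ≤ y) (hym : y ≤ min κ q) :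
    min (max y (κ*(1-ω))) (min κ q) = y := by
  have : κ*(1-ω) ≤ κ*(1-ωl) := by gcongr
  rw [max_eq_left (this.trans hy), min_eq_left hym]

variable {Λ : Measure ℝ} [IsProbabilityMeasure Λ] {ωl ωh : ℝ}

lemma UQ_eq_of_le {y : ℝ} (hκ : 0 ≤ κ) (hae : ∀ᵐ ω ∂Λ, ω ∈ Icc ωl ωh)
    (hy : κ*(1-ωl) ≤ y) (hym : y ≤ min κ q) :
    UQ q κ γ β Λ y = q * Emean Λ + (1 + γ - Emean Λ)*y - (1/2)*(1/κ+γ*β)*y^2 := by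
  have hid : Integrable (fun ω : ℝ => ω) Λ := integrable_of_ae_mem_Icc continuous_id hae
  have haffine : (fun ω => U q κ γ β (min (max y (κ*(1-ω))) (min κ q)) ω) =ᵐ[Λ]
      fun ω => (q - y)*ω + ((1+γ)*y - (1/2)*(1/κ+γ*β)*y^2) := by
    filter_upwards [hae] with ω hω
    rw [admitted_eq_of_le hκ hω.1 hy hym, U]
    ring
  rw [UQ, integral_congr_ae haffine, integral_add (hid.const_mul _) (integrable_const _),
    integral_const_mul, integral_const, probReal_univ, one_smul, Emean]
  ring

lemma U_admitted_le_of_mem_Icc {Q ω : ℝ} (hκ : 0 < κ) (hγ : 0 ≤ γ) (hβ : 0 ≤ β)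
    (hreg : κ*(1-ωl) ≤ (1 + γ - ωh)/(1/κ + γ*β))
    (hQm : Q ≤ min κ q) (hω : ω ∈ Icc ωl ωh) :
    U q κ γ β (min (max Q (κ*(1-ω))) (min κ q)) ω ≤ U q κ γ β (max Q (κ*(1-ωl))) ω := by
  have hc : 0 < 1/κ + γ*β := by positivity
  have hωK : κ*(1-ω) ≤ κ*(1-ωl) := by nlinarith [hω.1]
  rcases le_or_gt Q (κ*(1-ωl)) with hQ | hQ
  · rw [max_eq_right hQ]
    refine U_le_U_of_le ω hc.le (min_le_of_left_le (max_le hQ hωK)) ?_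
    nlinarith [(le_div_iff₀' hc).mp hreg, hω.2]
  · rw [max_eq_left hQ.le, admitted_eq_of_le hκ.le hω.1 hQ.le hQm]

lemma UQ_le_UQ_max {Q : ℝ} (hκ : 0 < κ) (hγ : 0 ≤ γ) (hβ : 0 ≤ β)
    (hreg : κ*(1-ωl) ≤ (1 + γ - ωh)/(1/κ + γ*β)) (hKm : κ*(1-ωl) ≤ min κ q)
    (hae : ∀ᵐ ω ∂Λ, ω ∈ Icc ωl ωh) (hQm : Q ≤ min κ q) :
    UQ q κ γ β Λ Q ≤ UQ q κ γ β Λ (max Q (κ*(1-ωl))) := by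
  have hint : ∀ y, Integrable (fun ω => U q κ γ β (min (max y (κ*(1-ω))) (min κ q)) ω) Λ :=
    fun y => integrable_of_ae_mem_Icc (by unfold U; fun_prop) hae
  refine integral_mono_ae (hint Q) (hint _) ?_
  filter_upwards [hae] with ω hω
  rw [admitted_eq_of_le hκ.le hω.1 (le_max_right _ _) (max_le hQm hKm)]
  exact U_admitted_le_of_mem_Icc hκ hγ hβ hreg hQm hω

end Quota

theorem stmt_3_general (q κ γ β ωl ωh : ℝ)
    (hκ : 0 < κ) (hγ : 0 ≤ γ) (hβ : 0 ≤ β)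
    (hreg1 : (1 + γ - ωl)/(1/κ + γ*β) + κ*(ωh - ωl) < min κ q)
    (hreg2 : κ*(1 - ωl) < (1 + γ - ωh)/(1/κ + γ*β))
    (Λ : Measure ℝ) [IsProbabilityMeasure Λ] (hsupp : Λ (Set.Icc ωl ωh)ᶜ = 0) :
    κ*(1 - ωl) < (1 + γ - Emean Λ)/(1/κ + γ*β) ∧
    (1 + γ - Emean Λ)/(1/κ + γ*β) < min κ q ∧
    (∀ Q ∈ Set.Icc (0:ℝ) (min κ q),
      UQ q κ γ β Λ Q ≤ UQ q κ γ β Λ ((1 + γ - Emean Λ)/(1/κ + γ*β))) ∧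
    UQ q κ γ β Λ ((1 + γ - Emean Λ)/(1/κ + γ*β))
      = q * Emean Λ + (1 + γ - Emean Λ) * ((1 + γ - Emean Λ)/(1/κ + γ*β))
        - (1/2) * (1/κ + γ*β) * ((1 + γ - Emean Λ)/(1/κ + γ*β))^2 := by
  have hc : 0 < 1/κ + γ*β := by positivity
  have hae : ∀ᵐ ω ∂Λ, ω ∈ Icc ωl ωh := Filter.eventually_mem_set.mpr hsupp
  obtain ⟨hEl, hEh⟩ : Emean Λ ∈ Icc ωl ωh :=
    (convex_Icc ωl ωh).integral_mem isClosed_Icc hae (integrable_of_ae_mem_Icc continuous_id hae)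
  have hKQ : κ*(1 - ωl) < (1 + γ - Emean Λ)/(1/κ + γ*β) :=
    hreg2.trans_le (by gcongr)
  have hQm : (1 + γ - Emean Λ)/(1/κ + γ*β) < min κ q := by
    have : (1 + γ - Emean Λ)/(1/κ + γ*β) ≤ (1 + γ - ωl)/(1/κ + γ*β) := by gcongr
    nlinarith [mul_nonneg hκ.le (sub_nonneg.2 (hEl.trans hEh))]
  refine ⟨hKQ, hQm, fun Q hQ => ?_, UQ_eq_of_le hκ.le hae hKQ.le hQm.le⟩
  have hKm := hKQ.le.trans hQm.le
  calc UQ q κ γ β Λ Q ≤ UQ q κ γ β Λ (max Q (κ*(1-ωl))) :=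
        UQ_le_UQ_max hκ hγ hβ hreg2.le hKm hae hQ.2
    _ ≤ _ := by
        rw [UQ_eq_of_le hκ.le hae (le_max_right _ _) (max_le hQ.2 hKm),
          UQ_eq_of_le hκ.le hae hKQ.le hQm.le]
        linarith [quadratic_le_vertex hc (1 + γ - Emean Λ) (max Q (κ*(1-ωl)))]

/-- The quota `Q* = (1+γ−E[ω])/(1/κ+γβ)` satisfies `κ(1−ω̲) < Q* < min{κ,q}`,
maximizes the quota value over `[0, min{κ,q}]`, and its value is
`q·E[ω] + (1+γ−E[ω])·Q* − (1/2)(1/κ+γβ)·Q*²`. -/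
theorem stmt_3 (q κ γ β ωl ωh : ℝ)
    (hq0 : 0 < q) (hq1 : q ≤ 1) (hκ : 0 < κ) (hγ : 0 ≤ γ) (hβ : 0 ≤ β)
    (hωl : 0 ≤ ωl) (hωlt : ωl < ωh) (hωh : ωh ≤ 1)
    (hreg1 : (1 + γ - ωl)/(1/κ + γ*β) + κ*(ωh - ωl) < min κ q)
    (hreg2 : κ*(1 - ωl) < (1 + γ - ωh)/(1/κ + γ*β))
    (Λ : Measure ℝ) [IsProbabilityMeasure Λ] (hsupp : Λ (Set.Icc ωl ωh)ᶜ = 0) :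
    κ*(1 - ωl) < (1 + γ - Emean Λ)/(1/κ + γ*β) ∧
    (1 + γ - Emean Λ)/(1/κ + γ*β) < min κ q ∧
    (∀ Q ∈ Set.Icc (0:ℝ) (min κ q),
      UQ q κ γ β Λ Q ≤ UQ q κ γ β Λ ((1 + γ - Emean Λ)/(1/κ + γ*β))) ∧
    UQ q κ γ β Λ ((1 + γ - Emean Λ)/(1/κ + γ*β))
      = q * Emean Λ + (1 + γ - Emean Λ) * ((1 + γ - Emean Λ)/(1/κ + γ*β))
        - (1/2) * (1/κ + γ*β) * ((1 + γ - Emean Λ)/(1/κ + γ*β))^2 :=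
  stmt_3_general q κ γ β ωl ωh hκ hγ hβ hreg1 hreg2 Λ hsupp
end

section
/- The loss from restricting attention to priority mechanisms satisfies V* − V_P = (1/2)·(κγβ)²·κ·Var[ω]/(1+κγβ), where V* = ∫ max_{x ∈ [0, min{κ,q}]} U(x, ω) dΛ(ω) and V_P is the supremum over α ≥ 0 of ∫ U(min{κ(1+α−ω), min{κ,q}}, ω) dΛ(ω). -/
open Set MeasureTheory

/-- Variance of ω under Λ. -/
noncomputable def Vvar (Λ : Measure ℝ) : ℝ := ∫ ω, (ω - Emean Λ)^2 ∂Λ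

/-- First-best value. -/
noncomputable def Vstar (q κ γ β : ℝ) (Λ : Measure ℝ) : ℝ :=
  ∫ ω, sSup ((fun x => U q κ γ β x ω) '' Set.Icc (0:ℝ) (min κ q)) ∂Λ

/-- Value of the priority policy α. -/
noncomputable def UP (q κ γ β : ℝ) (Λ : Measure ℝ) (α : ℝ) : ℝ :=
  ∫ ω, U q κ γ β (min (κ*(1+α-ω)) (min κ q)) ω ∂Λ

/-- Optimal priority value `V_P = sup_{α ≥ 0} U_P(α)`. -/
noncomputable def VP (q κ γ β : ℝ) (Λ : Measure ℝ) : ℝ :=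
  sSup (UP q κ γ β Λ '' Set.Ici (0:ℝ))

noncomputable def idealAdmission (κ γ β ω : ℝ) : ℝ := (1 + γ - ω) / (1/κ + γ*β)

noncomputable def firstBestPayoff (q κ γ β ω : ℝ) : ℝ :=
  q * ω + (1 + γ - ω)^2 / (2 * (1/κ + γ*β))

noncomputable def matchingPriority (κ γ β ω : ℝ) : ℝ := ω - 1 + idealAdmission κ γ β ω / κ

section Payoff

variable {q κ γ β : ℝ}

lemma U_eq_firstBestPayoff_sub (hc : 1/κ + γ*β ≠ 0) (x ω : ℝ) :
    U q κ γ β x ω = firstBestPayoff q κ γ β ω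
      - (1/κ + γ*β) / 2 * (x - idealAdmission κ γ β ω)^2 := by
  unfold U firstBestPayoff idealAdmission
  field_simp
  ring

lemma U_le_firstBestPayoff (hc : 0 < 1/κ + γ*β) (x ω : ℝ) :
    U q κ γ β x ω ≤ firstBestPayoff q κ γ β ω := by
  rw [U_eq_firstBestPayoff_sub hc.ne']
  exact sub_le_self _ (by positivity)

lemma U_idealAdmission (hc : 1/κ + γ*β ≠ 0) (ω : ℝ) :
    U q κ γ β (idealAdmission κ γ β ω) ω = firstBestPayoff q κ γ β ω := by
  simp [U_eq_firstBestPayoff_sub hc]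

lemma U_le_U_of_idealAdmission_le (hc : 0 < 1/κ + γ*β) {ω x y : ℝ}
    (hy : idealAdmission κ γ β ω ≤ y) (hyx : y ≤ x) : U q κ γ β x ω ≤ U q κ γ β y ω := by
  rw [U_eq_firstBestPayoff_sub hc.ne', U_eq_firstBestPayoff_sub hc.ne']
  have : (y - idealAdmission κ γ β ω)^2 ≤ (x - idealAdmission κ γ β ω)^2 := by gcongr
  have := mul_le_mul_of_nonneg_left this (half_pos hc).le
  linarith

lemma isGreatest_U_image_Icc (hc : 0 < 1/κ + γ*β) {m ω : ℝ}
    (h : idealAdmission κ γ β ω ∈ Icc 0 m) :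
    IsGreatest ((fun x => U q κ γ β x ω) '' Icc 0 m) (firstBestPayoff q κ γ β ω) :=
  ⟨⟨_, h, U_idealAdmission hc.ne' ω⟩, by
    rintro _ ⟨x, -, rfl⟩
    exact U_le_firstBestPayoff hc x ω⟩

lemma idealAdmission_antitone (hc : 0 < 1/κ + γ*β) : Antitone (idealAdmission κ γ β) :=
  fun _ _ h => div_le_div_of_nonneg_right (by linarith) hc.le

lemma mul_one_add_matchingPriority_sub (hκ : κ ≠ 0) (ω : ℝ) :
    κ * (1 + matchingPriority κ γ β ω - ω) = idealAdmission κ γ β ω := by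
  unfold matchingPriority
  field_simp
  ring

lemma mul_one_add_sub_sub_idealAdmission (hκ : κ ≠ 0) (α ω ω₀ : ℝ) :
    κ * (1 + α - ω) - idealAdmission κ γ β ω
      = κ * (α - matchingPriority κ γ β ω₀) + (κ - 1 / (1/κ + γ*β)) * (ω₀ - ω) := by
  have h₀ := mul_one_add_matchingPriority_sub (γ := γ) (β := β) hκ ω₀
  unfold idealAdmission at *
  linear_combination h₀

lemma matchingPriority_monotone (hκ : 0 < κ) (hK : 1 / (1/κ + γ*β) ≤ κ) :
    Monotone (matchingPriority κ γ β) := by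
  intro ω ω₀ h
  have := mul_one_add_sub_sub_idealAdmission (γ := γ) (β := β) hκ.ne'
    (matchingPriority κ γ β ω) ω ω₀
  rw [mul_one_add_matchingPriority_sub hκ.ne', sub_self] at this
  nlinarith [mul_nonneg (sub_nonneg.2 hK) (sub_nonneg.2 h)]

lemma matchingPriority_pos_iff (hκ : 0 < κ) (ω : ℝ) :
    0 < matchingPriority κ γ β ω ↔ κ * (1 - ω) < idealAdmission κ γ β ω := by
  rw [← mul_one_add_matchingPriority_sub hκ.ne', mul_lt_mul_iff_right₀ hκ]
  constructor <;> intro <;> linarith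

lemma idealAdmission_le_mul_one_add_matchingPriority_sub (hκ : κ ≠ 0)
    (hK : 1 / (1/κ + γ*β) ≤ κ) {ω ω₀ : ℝ} (h : ω ≤ ω₀) :
    idealAdmission κ γ β ω ≤ κ * (1 + matchingPriority κ γ β ω₀ - ω) := by
  have := mul_one_add_sub_sub_idealAdmission (γ := γ) (β := β) hκ (matchingPriority κ γ β ω₀) ω ω₀
  rw [sub_self, mul_zero, zero_add] at this
  linarith [mul_nonneg (sub_nonneg.2 hK) (sub_nonneg.2 h)]

end Payoff

section Measure

variable {Λ : Measure ℝ} {a b : ℝ}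

lemma Continuous.integrable_of_ae_mem_Icc {E : Type*} [NormedAddCommGroup E] [IsFiniteMeasure Λ]
    (hae : ∀ᵐ ω ∂Λ, ω ∈ Icc a b) {f : ℝ → E} (hf : Continuous f) : Integrable f Λ := by
  rw [← Measure.restrict_eq_self_of_ae_mem hae]
  exact hf.integrableOn_Icc

lemma Emean_mem_Icc [IsProbabilityMeasure Λ] (hae : ∀ᵐ ω ∂Λ, ω ∈ Icc a b) :
    Emean Λ ∈ Icc a b :=
  (convex_Icc a b).integral_mem isClosed_Icc hae (continuous_id.integrable_of_ae_mem_Icc hae)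

lemma integral_add_mul_Emean_sub_sq [IsProbabilityMeasure Λ] (h₁ : Integrable (fun ω => ω) Λ)
    (h₂ : Integrable (fun ω => (ω - Emean Λ)^2) Λ) (s t : ℝ) :
    ∫ ω, (s + t * (Emean Λ - ω))^2 ∂Λ = s^2 + t^2 * Vvar Λ := by
  have h₃ : Integrable (fun ω => Emean Λ - ω) Λ := (integrable_const _).sub h₁
  have h₄ : ∫ ω, (Emean Λ - ω) ∂Λ = 0 := by
    rw [integral_sub (integrable_const _) h₁, integral_const, probReal_univ, one_smul, Emean,
      sub_self]
  have h₅ : Integrable (fun ω => s^2 + 2*s*t * (Emean Λ - ω)) Λ :=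
    (integrable_const _).add (h₃.const_mul _)
  calc ∫ ω, (s + t * (Emean Λ - ω))^2 ∂Λ
      = ∫ ω, ((s^2 + 2*s*t * (Emean Λ - ω)) + t^2 * (ω - Emean Λ)^2) ∂Λ := by
        congr 1; ext ω; ring
    _ = s^2 + t^2 * Vvar Λ := by
        rw [integral_add h₅ (h₂.const_mul _),
          integral_add (integrable_const _) (h₃.const_mul _), integral_const_mul,
          integral_const_mul, h₄, integral_const, probReal_univ, one_smul, Vvar]
        ring

end Measure

section Policies

variable {q κ γ β a b : ℝ} {Λ : Measure ℝ}

lemma Vstar_eq_integral_firstBestPayoff (hae : ∀ᵐ ω ∂Λ, ω ∈ Icc a b) (hc : 0 < 1/κ + γ*β)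
    (hideal : ∀ ω ∈ Icc a b, idealAdmission κ γ β ω ∈ Icc 0 (min κ q)) :
    Vstar q κ γ β Λ = ∫ ω, firstBestPayoff q κ γ β ω ∂Λ :=
  integral_congr_ae <| hae.mono fun ω hω => (isGreatest_U_image_Icc hc (hideal ω hω)).csSup_eq

lemma integral_U_priority [IsProbabilityMeasure Λ] (hae : ∀ᵐ ω ∂Λ, ω ∈ Icc a b) (hκ : κ ≠ 0)
    (hc : 1/κ + γ*β ≠ 0) (α : ℝ) :
    ∫ ω, U q κ γ β (κ * (1 + α - ω)) ω ∂Λ = ∫ ω, firstBestPayoff q κ γ β ω ∂Λ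
      - (1/κ + γ*β) / 2 * (κ^2 * (α - matchingPriority κ γ β (Emean Λ))^2
        + (κ - 1 / (1/κ + γ*β))^2 * Vvar Λ) := by
  have hint : ∀ {f : ℝ → ℝ}, Continuous f → Integrable f Λ := (·.integrable_of_ae_mem_Icc hae)
  simp_rw [U_eq_firstBestPayoff_sub hc, mul_one_add_sub_sub_idealAdmission hκ α _ (Emean Λ)]
  rw [integral_sub (hint (by unfold firstBestPayoff; fun_prop)) (hint (by fun_prop)),
    integral_const_mul, integral_add_mul_Emean_sub_sq (hint (by fun_prop)) (hint (by fun_prop)),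
    mul_pow]

lemma UP_eq_integral_U_priority (hae : ∀ᵐ ω ∂Λ, ω ∈ Icc a b) (hκ : 0 ≤ κ) {α B : ℝ}
    (hB : ∀ ω ∈ Icc a b, κ * (1 + B - ω) ≤ min κ q) (hαB : α ≤ B) :
    UP q κ γ β Λ α = ∫ ω, U q κ γ β (κ * (1 + α - ω)) ω ∂Λ := by
  refine integral_congr_ae <| hae.mono fun ω hω => ?_
  have : κ * (1 + α - ω) ≤ κ * (1 + B - ω) := by gcongr
  dsimp only
  rw [min_eq_left (this.trans (hB ω hω))]

lemma UP_le_UP_of_le [IsFiniteMeasure Λ] (hae : ∀ᵐ ω ∂Λ, ω ∈ Icc a b) (hκ : 0 ≤ κ)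
    (hc : 0 < 1/κ + γ*β) {α B : ℝ}
    (hB : ∀ ω ∈ Icc a b, idealAdmission κ γ β ω ≤ κ * (1 + B - ω) ∧ κ * (1 + B - ω) ≤ min κ q)
    (hBα : B ≤ α) : UP q κ γ β Λ α ≤ UP q κ γ β Λ B := by
  have hint : ∀ α', Integrable (fun ω => U q κ γ β (min (κ * (1 + α' - ω)) (min κ q)) ω) Λ :=
    fun _ => Continuous.integrable_of_ae_mem_Icc hae (by unfold U; fun_prop)
  refine integral_mono_ae (hint α) (hint B) <| hae.mono fun ω hω => ?_
  obtain ⟨hideal, hmin⟩ := hB ω hω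
  have : κ * (1 + B - ω) ≤ κ * (1 + α - ω) := by gcongr
  dsimp only
  rw [min_eq_left hmin]
  exact U_le_U_of_idealAdmission_le hc hideal (le_min this hmin)

lemma VP_eq_integral_firstBestPayoff_sub [IsProbabilityMeasure Λ] (hae : ∀ᵐ ω ∂Λ, ω ∈ Icc a b)
    (hκ : 0 < κ) (hc : 0 < 1/κ + γ*β) {B : ℝ}
    (hB : ∀ ω ∈ Icc a b, idealAdmission κ γ β ω ≤ κ * (1 + B - ω) ∧ κ * (1 + B - ω) ≤ min κ q)
    (hA : matchingPriority κ γ β (Emean Λ) ∈ Icc 0 B) :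
    VP q κ γ β Λ = ∫ ω, firstBestPayoff q κ γ β ω ∂Λ
      - (1/κ + γ*β) / 2 * ((κ - 1 / (1/κ + γ*β))^2 * Vvar Λ) := by
  set A := matchingPriority κ γ β (Emean Λ)
  have hUP : ∀ α ∈ Icc 0 B, UP q κ γ β Λ α = ∫ ω, firstBestPayoff q κ γ β ω ∂Λ
      - (1/κ + γ*β) / 2 * (κ^2 * (α - A)^2 + (κ - 1 / (1/κ + γ*β))^2 * Vvar Λ) := fun α hα => by
    rw [UP_eq_integral_U_priority hae hκ.le (fun ω hω => (hB ω hω).2) hα.2,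
      integral_U_priority hae hκ.ne' hc.ne']
  refine IsGreatest.csSup_eq ⟨⟨A, hA.1, by rw [hUP A hA]; ring⟩, ?_⟩
  rintro _ ⟨α, hα, rfl⟩
  calc UP q κ γ β Λ α ≤ UP q κ γ β Λ (min α B) := by
        rcases le_total α B with h | h
        · rw [min_eq_left h]
        · rw [min_eq_right h]; exact UP_le_UP_of_le hae hκ.le hc hB h
    _ ≤ _ := by
        rw [hUP _ ⟨le_min hα (hA.1.trans hA.2), min_le_right _ _⟩]
        have := mul_nonneg (half_pos hc).le (mul_nonneg (sq_nonneg κ) (sq_nonneg (min α B - A)))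
        nlinarith

end Policies

theorem stmt_7_general (q κ γ β ωl ωh : ℝ)
    (hκ : 0 < κ) (hγ : 0 ≤ γ) (hβ : 0 ≤ β)
    (hωlt : ωl < ωh) (hωh : ωh ≤ 1)
    (hreg1 : (1 + γ - ωl)/(1/κ + γ*β) + κ*(ωh - ωl) < min κ q)
    (hreg2 : κ*(1 - ωl) < (1 + γ - ωh)/(1/κ + γ*β))
    (Λ : Measure ℝ) [IsProbabilityMeasure Λ] (hsupp : Λ (Set.Icc ωl ωh)ᶜ = 0) :
    Vstar q κ γ β Λ - VP q κ γ β Λ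
      = (1/2) * (κ*γ*β)^2 * κ * Vvar Λ / (1 + κ*γ*β) := by
  have hc : 0 < 1/κ + γ*β := by positivity
  have hK : 1 / (1/κ + γ*β) ≤ κ := by
    rw [div_le_iff₀ hc, mul_add, mul_one_div_cancel hκ.ne']
    exact le_add_of_nonneg_right (by positivity)
  have hae : ∀ᵐ ω ∂Λ, ω ∈ Icc ωl ωh := mem_ae_iff.mpr hsupp
  have hE := Emean_mem_Icc hae
  have hanti := idealAdmission_antitone hc
  have hmono := matchingPriority_monotone hκ hK
  set B := matchingPriority κ γ β ωh
  have hideal : ∀ ω ∈ Icc ωl ωh, idealAdmission κ γ β ω ∈ Icc 0 (min κ q) := fun ω hω =>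
    ⟨div_nonneg (by linarith [hω.2]) hc.le,
      calc idealAdmission κ γ β ω ≤ idealAdmission κ γ β ωl := hanti hω.1
        _ ≤ idealAdmission κ γ β ωl + κ * (ωh - ωl) :=
          le_add_of_nonneg_right (mul_nonneg hκ.le (sub_nonneg.2 hωlt.le))
        _ ≤ min κ q := hreg1.le⟩
  have hB : ∀ ω ∈ Icc ωl ωh,
      idealAdmission κ γ β ω ≤ κ * (1 + B - ω) ∧ κ * (1 + B - ω) ≤ min κ q := fun ω hω =>
    ⟨idealAdmission_le_mul_one_add_matchingPriority_sub hκ.ne' hK hω.2,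
      calc κ * (1 + B - ω) ≤ κ * (1 + B - ωl) := by gcongr; exact hω.1
        _ = idealAdmission κ γ β ωh + κ * (ωh - ωl) := by
          rw [← mul_one_add_matchingPriority_sub hκ.ne' ωh]; ring
        _ ≤ idealAdmission κ γ β ωl + κ * (ωh - ωl) := by gcongr; exact hanti hωlt.le
        _ ≤ min κ q := hreg1.le⟩
  have hA : matchingPriority κ γ β (Emean Λ) ∈ Icc 0 B :=
    ⟨((matchingPriority_pos_iff hκ ωl).2 (hreg2.trans_le (hanti hωlt.le))).le.trans (hmono hE.1),
      hmono hE.2⟩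
  rw [Vstar_eq_integral_firstBestPayoff hae hc hideal,
    VP_eq_integral_firstBestPayoff_sub hae hκ hc hB hA]
  field_simp
  ring

/-- The loss from restricting to priority mechanisms:
`V* − V_P = (1/2)·(κγβ)²·κ·Var[ω]/(1+κγβ)`. -/
theorem stmt_7 (q κ γ β ωl ωh : ℝ)
    (hq0 : 0 < q) (hq1 : q ≤ 1) (hκ : 0 < κ) (hγ : 0 ≤ γ) (hβ : 0 ≤ β)
    (hωl : 0 ≤ ωl) (hωlt : ωl < ωh) (hωh : ωh ≤ 1)
    (hreg1 : (1 + γ - ωl)/(1/κ + γ*β) + κ*(ωh - ωl) < min κ q)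
    (hreg2 : κ*(1 - ωl) < (1 + γ - ωh)/(1/κ + γ*β))
    (Λ : Measure ℝ) [IsProbabilityMeasure Λ] (hsupp : Λ (Set.Icc ωl ωh)ᶜ = 0) :
    Vstar q κ γ β Λ - VP q κ γ β Λ
      = (1/2) * (κ*γ*β)^2 * κ * Vvar Λ / (1 + κ*γ*β) :=
  stmt_7_general q κ γ β ωl ωh hκ hγ hβ hωlt hωh hreg1 hreg2 Λ hsupp
end

section
/- If S and S' are two subsets of Θ, each of cardinality q and each implemented by the optimal APM A*, then W(S) = W(S'). -/
/-!
Condition (i) says that within each group `S` and `S'` both admit the best-scoring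
agents, so group by group one of the two admitted sets contains the other. Concavity of `u_g`
then bounds the change of the group's payoff when passing from `S` to `S'`: it is at most the sum
of the marginal gains (with respect to `S`) of the agents added, minus the sum of the marginal
losses of the agents removed. Added and removed agents lie in different groups, so condition (ii)
bounds every such gain by every such loss; as `|S' \ S| = |S \ S'|`, this gives
`W(S') ≤ W(S)`, and the theorem follows by symmetry.
-/

open Finset

/-- Number of agents from group `g` in `S`. -/
def xg {Θ M : Type*} [DecidableEq M] (m : Θ → M) (S : Finset Θ) (g : M) : ℕ :=
  (S.filter (fun θ => m θ = g)).card

/-- The authority's payoff from admitting the set `S`: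
`W(S) = Σ_{θ∈S} h(s(θ)) + Σ_{g} u_g(x_g(S))`. -/
noncomputable def W {Θ M : Type*} [Fintype M] [DecidableEq M]
    (h : ℝ → ℝ) (s : Θ → ℝ) (u : M → ℕ → ℝ) (m : Θ → M) (S : Finset Θ) : ℝ :=
  (∑ θ ∈ S, h (s θ)) + ∑ g : M, u g (xg m S g)

/-- `S` is implemented by the optimal APM `A*`. -/
def ImplementedByAPM {Θ M : Type*} [DecidableEq M]
    (h : ℝ → ℝ) (s : Θ → ℝ) (u : M → ℕ → ℝ) (m : Θ → M) (S : Finset Θ) : Prop :=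
  (∀ θ ∈ S, ∀ θ' : Θ, θ' ∉ S → m θ' = m θ → s θ' < s θ) ∧
  (∀ θ ∈ S, ∀ θ' : Θ, θ' ∉ S → m θ' ≠ m θ →
    h (s θ') + (u (m θ') (xg m S (m θ') + 1) - u (m θ') (xg m S (m θ'))) ≤
    h (s θ) + (u (m θ) (xg m S (m θ)) - u (m θ) (xg m S (m θ) - 1)))

section Concave

variable {u : ℕ → ℝ}

theorem sub_le_mul_of_antitone_sub (hu : Antitone fun k => u (k + 1) - u k) (k n : ℕ) :
    u (k + n) - u k ≤ n * (u (k + 1) - u k) := by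
  have hsum := Finset.sum_range_sub (fun i => u (k + i)) n
  have hle := Finset.sum_le_card_nsmul (range n) (fun i => u (k + (i + 1)) - u (k + i))
    (u (k + 1) - u k) fun i _ => hu (Nat.le_add_right k i)
  simp only [card_range, nsmul_eq_mul, add_zero] at hsum hle
  linarith

theorem mul_le_sub_of_antitone_sub (hu : Antitone fun k => u (k + 1) - u k) (k n : ℕ) :
    n * (u (k + n) - u (k + n - 1)) ≤ u (k + n) - u k := by
  rcases n.eq_zero_or_pos with rfl | hn
  · simp
  have hsum := Finset.sum_range_sub (fun i => u (k + i)) n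
  have hle := Finset.card_nsmul_le_sum (range n) (fun i => u (k + (i + 1)) - u (k + i))
    (u (k + n) - u (k + n - 1)) fun i hi => by
      have hi : k + i ≤ k + n - 1 := by simp only [mem_range] at hi; omega
      simpa only [Nat.sub_add_cancel (by omega : 1 ≤ k + n), add_assoc] using hu hi
  simp only [card_range, nsmul_eq_mul, add_zero] at hsum hle
  linarith

variable {α : Type*} [DecidableEq α] {P P' : Finset α}

theorem sum_add_sub_sum_add_le_of_subset (f : α → ℝ) (hu : Antitone fun k => u (k + 1) - u k)
    (hP : P ⊆ P') :
    (∑ x ∈ P', f x + u #P') - (∑ x ∈ P, f x + u #P) ≤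
      ∑ x ∈ P' \ P, (f x + (u (#P + 1) - u #P)) := by
  rw [← sum_sdiff hP, ← card_sdiff_add_card_eq_card hP, sum_add_distrib, sum_const, nsmul_eq_mul,
    add_comm #(P' \ P)]
  linarith [sub_le_mul_of_antitone_sub hu #P #(P' \ P)]

theorem sum_add_sub_sum_add_le_of_superset (f : α → ℝ) (hu : Antitone fun k => u (k + 1) - u k)
    (hP : P' ⊆ P) :
    (∑ x ∈ P', f x + u #P') - (∑ x ∈ P, f x + u #P) ≤
      -∑ x ∈ P \ P', (f x + (u #P - u (#P - 1))) := by
  rw [← sum_sdiff hP, ← card_sdiff_add_card_eq_card hP, sum_add_distrib, sum_const, nsmul_eq_mul,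
    add_comm #(P \ P')]
  linarith [mul_le_sub_of_antitone_sub hu #P' #(P \ P')]

end Concave

theorem sum_le_sum_of_forall_le_of_card_eq {ι κ R : Type*} [AddCommMonoid R] [LinearOrder R]
    [IsOrderedCancelAddMonoid R] {A : Finset ι} {B : Finset κ} {f : ι → R} {g : κ → R}
    (hcard : #A = #B) (hfg : ∀ a ∈ A, ∀ b ∈ B, f a ≤ g b) :
    ∑ a ∈ A, f a ≤ ∑ b ∈ B, g b := by
  rcases A.eq_empty_or_nonempty with rfl | hA
  · rw [card_empty, eq_comm, card_eq_zero] at hcard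
    simp [hcard]
  have hdouble : ∑ a ∈ A, ∑ _b ∈ B, f a ≤ ∑ _a ∈ A, ∑ b ∈ B, g b :=
    sum_le_sum fun a ha => sum_le_sum fun b hb => hfg a ha b hb
  simp only [sum_const, ← sum_nsmul, ← hcard] at hdouble
  exact (nsmul_le_nsmul_iff_right hA.card_pos.ne').1 (by simpa [smul_sum] using hdouble)

theorem Finset.filter_sdiff_eq_sdiff_filter {α : Type*} [DecidableEq α] (p : α → Prop)
    [DecidablePred p] (s t : Finset α) : {x ∈ s \ t | p x} = {x ∈ s | p x} \ {x ∈ t | p x} := by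
  ext
  simp only [mem_filter, mem_sdiff]
  tauto

section Admission

variable {Θ M : Type*} [DecidableEq M] {h : ℝ → ℝ} {s : Θ → ℝ} {u : M → ℕ → ℝ} {m : Θ → M}
  {S S' : Finset Θ}

def IsTopWithinGroups (s : Θ → ℝ) (m : Θ → M) (S : Finset Θ) : Prop :=
  ∀ θ ∈ S, ∀ θ' : Θ, θ' ∉ S → m θ' = m θ → s θ' < s θ

theorem filter_subset_filter_of_xg_le (hS : IsTopWithinGroups s m S)
    (hS' : IsTopWithinGroups s m S') {g : M} (hle : xg m S g ≤ xg m S' g) :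
    {θ ∈ S | m θ = g} ⊆ {θ ∈ S' | m θ = g} := by
  intro θ hθ
  obtain ⟨hθS, hθg⟩ := mem_filter.1 hθ
  refine mem_filter.2 ⟨?_, hθg⟩
  by_contra hθS'
  have hsub : {θ ∈ S' | m θ = g} ⊆ {θ ∈ S | m θ = g} := fun θ' hθ' => by
    obtain ⟨hθ'S', hθ'g⟩ := mem_filter.1 hθ'
    refine mem_filter.2 ⟨?_, hθ'g⟩
    by_contra hθ'S
    have := hS θ hθS θ' hθ'S (hθ'g.trans hθg.symm)
    have := hS' θ' hθ'S' θ hθS' (hθg.trans hθ'g.symm)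
    linarith
  have hθnot : θ ∉ {θ ∈ S' | m θ = g} := fun h' => hθS' (mem_filter.1 h').1
  exact (card_lt_card ((ssubset_iff_of_subset hsub).2 ⟨θ, hθ, hθnot⟩)).not_ge hle

theorem xg_lt_of_mem_sdiff [DecidableEq Θ] (hS : IsTopWithinGroups s m S)
    (hS' : IsTopWithinGroups s m S') {θ : Θ} (hθ : θ ∈ S' \ S) :
    xg m S (m θ) < xg m S' (m θ) := by
  by_contra! hle
  obtain ⟨hθS', hθS⟩ := mem_sdiff.1 hθ
  exact hθS (mem_filter.1 (filter_subset_filter_of_xg_le hS' hS hle (mem_filter.2 ⟨hθS', rfl⟩))).1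

/-- `W h s u m (insert θ S) - W h s u m S` when `θ ∉ S`. -/
noncomputable def marginalGain (h : ℝ → ℝ) (s : Θ → ℝ) (u : M → ℕ → ℝ) (m : Θ → M)
    (S : Finset Θ) (θ : Θ) : ℝ :=
  h (s θ) + (u (m θ) (xg m S (m θ) + 1) - u (m θ) (xg m S (m θ)))

/-- `W h s u m S - W h s u m (S.erase θ)` when `θ ∈ S`. -/
noncomputable def marginalLoss (h : ℝ → ℝ) (s : Θ → ℝ) (u : M → ℕ → ℝ) (m : Θ → M)
    (S : Finset Θ) (θ : Θ) : ℝ :=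
  h (s θ) + (u (m θ) (xg m S (m θ)) - u (m θ) (xg m S (m θ) - 1))

noncomputable def groupPayoff (h : ℝ → ℝ) (s : Θ → ℝ) (u : M → ℕ → ℝ) (m : Θ → M)
    (S : Finset Θ) (g : M) : ℝ :=
  ∑ θ ∈ S with m θ = g, h (s θ) + u g (xg m S g)

theorem W_eq_sum_groupPayoff [Fintype M] : W h s u m S = ∑ g, groupPayoff h s u m S g := by
  simp only [W, groupPayoff, sum_add_distrib, sum_fiberwise]

theorem groupPayoff_sub_le [DecidableEq Θ] (hS : IsTopWithinGroups s m S)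
    (hS' : IsTopWithinGroups s m S') {g : M} (hu : Antitone fun k => u g (k + 1) - u g k) :
    groupPayoff h s u m S' g - groupPayoff h s u m S g ≤
      ∑ θ ∈ S' \ S with m θ = g, marginalGain h s u m S θ -
        ∑ θ ∈ S \ S' with m θ = g, marginalLoss h s u m S θ := by
  rw [filter_sdiff_eq_sdiff_filter, filter_sdiff_eq_sdiff_filter]
  rcases le_total (xg m S g) (xg m S' g) with hle | hle
  · have hsub := filter_subset_filter_of_xg_le hS hS' hle
    rw [sdiff_eq_empty_iff_subset.2 hsub, sum_empty, sub_zero]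
    calc _ ≤ ∑ θ ∈ {θ ∈ S' | m θ = g} \ {θ ∈ S | m θ = g},
            (h (s θ) + (u g (xg m S g + 1) - u g (xg m S g))) :=
          sum_add_sub_sum_add_le_of_subset _ hu hsub
      _ = _ := sum_congr rfl fun θ hθ => by
          rw [marginalGain, (mem_filter.1 (mem_sdiff.1 hθ).1).2]
  · have hsub := filter_subset_filter_of_xg_le hS' hS hle
    rw [sdiff_eq_empty_iff_subset.2 hsub, sum_empty, zero_sub]
    calc _ ≤ -∑ θ ∈ {θ ∈ S | m θ = g} \ {θ ∈ S' | m θ = g},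
            (h (s θ) + (u g (xg m S g) - u g (xg m S g - 1))) :=
          sum_add_sub_sum_add_le_of_superset _ hu hsub
      _ = _ := congrArg _ <| sum_congr rfl fun θ hθ => by
          rw [marginalLoss, (mem_filter.1 (mem_sdiff.1 hθ).1).2]

theorem W_sub_le [DecidableEq Θ] [Fintype M] (hS : IsTopWithinGroups s m S)
    (hS' : IsTopWithinGroups s m S') (hu : ∀ g, Antitone fun k => u g (k + 1) - u g k) :
    W h s u m S' - W h s u m S ≤
      ∑ θ ∈ S' \ S, marginalGain h s u m S θ - ∑ θ ∈ S \ S', marginalLoss h s u m S θ := by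
  rw [W_eq_sum_groupPayoff, W_eq_sum_groupPayoff, ← sum_sub_distrib, ← sum_fiberwise (S' \ S) m,
    ← sum_fiberwise (S \ S') m, ← sum_sub_distrib]
  exact sum_le_sum fun g _ => groupPayoff_sub_le hS hS' (hu g)

theorem W_le_of_implementedByAPM [DecidableEq Θ] [Fintype M] (hS : ImplementedByAPM h s u m S)
    (hS' : IsTopWithinGroups s m S') (hcard : #S = #S')
    (hu : ∀ g, Antitone fun k => u g (k + 1) - u g k) :
    W h s u m S' ≤ W h s u m S := by
  have hgain_le_loss : ∑ θ ∈ S' \ S, marginalGain h s u m S θ ≤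
      ∑ θ ∈ S \ S', marginalLoss h s u m S θ := by
    refine sum_le_sum_of_forall_le_of_card_eq (card_sdiff_comm hcard.symm) fun θ' hθ' θ hθ => ?_
    have hgroup : m θ' ≠ m θ := fun heq => by
      have hadded := xg_lt_of_mem_sdiff hS.1 hS' hθ'
      have hremoved := xg_lt_of_mem_sdiff hS' hS.1 hθ
      rw [heq] at hadded
      omega
    exact hS.2 θ (mem_sdiff.1 hθ).1 θ' (mem_sdiff.1 hθ').2 hgroup
  linarith [W_sub_le (h := h) hS.1 hS' hu]

end Admission

theorem stmt_10_general {Θ M : Type*} [DecidableEq Θ] [Fintype M] [DecidableEq M]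
    (s : Θ → ℝ) (m : Θ → M) (q : ℕ) (h : ℝ → ℝ) (u : M → ℕ → ℝ)
    (hu : ∀ g x, u g (x+2) - u g (x+1) ≤ u g (x+1) - u g x)
    (S S' : Finset Θ) (hScard : S.card = q) (hS'card : S'.card = q)
    (hS : ImplementedByAPM h s u m S) (hS' : ImplementedByAPM h s u m S') :
    W h s u m S = W h s u m S' := by
  have hconcave : ∀ g, Antitone fun k => u g (k + 1) - u g k :=
    fun g => antitone_nat_of_succ_le (hu g)
  have hcard : #S = #S' := hScard.trans hS'card.symm
  exact le_antisymm (W_le_of_implementedByAPM hS' hS.1 hcard.symm hconcave)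
    (W_le_of_implementedByAPM hS hS'.1 hcard hconcave)

/-- If `S` and `S'` are two subsets of Θ, each of cardinality `q` and each
implemented by the optimal APM `A*`, then `W(S) = W(S')`. -/
theorem stmt_10 {Θ M : Type*} [Fintype Θ] [DecidableEq Θ] [Fintype M] [DecidableEq M]
    (s : Θ → ℝ) (hs : Function.Injective s) (hs01 : ∀ θ, s θ ∈ Set.Icc (0:ℝ) 1)
    (m : Θ → M) (q : ℕ) (hq : q ≤ Fintype.card Θ)
    (h : ℝ → ℝ) (hh : StrictMonoOn h (Set.Icc (0:ℝ) 1))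
    (u : M → ℕ → ℝ)
    (hu : ∀ g x, u g (x+2) - u g (x+1) ≤ u g (x+1) - u g x)
    (S S' : Finset Θ) (hScard : S.card = q) (hS'card : S'.card = q)
    (hS : ImplementedByAPM h s u m S) (hS' : ImplementedByAPM h s u m S') :
    W h s u m S = W h s u m S' :=
  stmt_10_general s m q h u hu S S' hScard hS'card hS hS'
end

section
/- If S ⊆ Θ with |S| = q maximizes W among all subsets of cardinality q, then S is a within-group cutoff allocation: for all θ ∈ S and θ' ∉ S with m(θ) = m(θ'), one has s(θ) > s(θ'). -/
/-! Exchanging an admitted agent for a rejected agent of the same group preserves the size of the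
allocation and every group count, so it changes `W` only by the difference of the two `h`-values;
at a maximizer that difference cannot be positive, and strict monotonicity of `h` with injectivity
of `s` turns this into the strict score inequality. -/

open Finset

namespace Finset

variable {α : Type*} [DecidableEq α] {s : Finset α} {a b : α}

theorem card_filter_insert_erase (p : α → Prop) [DecidablePred p] (ha : a ∈ s) (hb : b ∉ s)
    (hab : p a ↔ p b) : #((insert b (s.erase a)).filter p) = #(s.filter p) := by
  have hb' : b ∉ (s.filter p).erase a := fun hb'' => hb (mem_filter.1 (mem_of_mem_erase hb'')).1
  rw [filter_insert, filter_erase]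
  by_cases hpb : p b
  · rw [if_pos hpb, card_insert_of_notMem hb', card_erase_add_one (mem_filter.2 ⟨ha, hab.2 hpb⟩)]
  · rw [if_neg hpb, erase_eq_of_notMem fun ha' => hpb (hab.1 (mem_filter.1 ha').2)]

theorem card_insert_erase (ha : a ∈ s) (hb : b ∉ s) : #(insert b (s.erase a)) = #s := by
  rw [card_insert_of_notMem fun hb' => hb (mem_of_mem_erase hb'), card_erase_add_one ha]

theorem sum_insert_erase {β : Type*} [AddCommGroup β] (f : α → β) (ha : a ∈ s) (hb : b ∉ s) :
    ∑ x ∈ insert b (s.erase a), f x = ∑ x ∈ s, f x - f a + f b := by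
  rw [sum_insert fun hb' => hb (mem_of_mem_erase hb'), sum_erase_eq_sub ha, add_comm]

end Finset

section Swap

variable {Θ M : Type*} [DecidableEq Θ] [DecidableEq M]

theorem xg_insert_erase (m : Θ → M) {S : Finset Θ} {θ θ' : Θ} (hθ : θ ∈ S) (hθ' : θ' ∉ S)
    (hm : m θ = m θ') (g : M) : xg m (insert θ' (S.erase θ)) g = xg m S g :=
  card_filter_insert_erase _ hθ hθ' (by rw [hm])

theorem W_insert_erase [Fintype M] (h : ℝ → ℝ) (s : Θ → ℝ) (u : M → ℕ → ℝ) (m : Θ → M)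
    {S : Finset Θ} {θ θ' : Θ} (hθ : θ ∈ S) (hθ' : θ' ∉ S) (hm : m θ = m θ') :
    W h s u m (insert θ' (S.erase θ)) = W h s u m S - h (s θ) + h (s θ') := by
  simp only [W, sum_insert_erase (fun x => h (s x)) hθ hθ', xg_insert_erase m hθ hθ' hm]
  ring

end Swap

theorem stmt_13_general {Θ M : Type*} [DecidableEq Θ] [Fintype M] [DecidableEq M]
    (s : Θ → ℝ) (hs : Function.Injective s) (hs01 : ∀ θ, s θ ∈ Set.Icc (0:ℝ) 1)
    (m : Θ → M) (q : ℕ)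
    (h : ℝ → ℝ) (hh : StrictMonoOn h (Set.Icc (0:ℝ) 1))
    (u : M → ℕ → ℝ)
    (S : Finset Θ) (hScard : S.card = q)
    (hmax : ∀ S' : Finset Θ, S'.card = q → W h s u m S' ≤ W h s u m S) :
    ∀ θ ∈ S, ∀ θ' : Θ, θ' ∉ S → m θ = m θ' → s θ' < s θ := by
  intro θ hθ θ' hθ' hm
  by_contra! hle
  have hlt : s θ < s θ' := hle.lt_of_ne fun he => hθ' (hs he ▸ hθ)
  have hgain := hmax _ ((card_insert_erase hθ hθ').trans hScard)
  rw [W_insert_erase h s u m hθ hθ' hm] at hgain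
  linarith [hh (hs01 θ) (hs01 θ') hlt]

/-- If `S` with `|S| = q` maximizes `W` among subsets of cardinality `q`, then
`S` is a within-group cutoff allocation: for all `θ ∈ S` and `θ' ∉ S` with
`m(θ) = m(θ')`, one has `s(θ) > s(θ')`. -/
theorem stmt_13 {Θ M : Type*} [Fintype Θ] [DecidableEq Θ] [Fintype M] [DecidableEq M]
    (s : Θ → ℝ) (hs : Function.Injective s) (hs01 : ∀ θ, s θ ∈ Set.Icc (0:ℝ) 1)
    (m : Θ → M) (q : ℕ) (hq : q ≤ Fintype.card Θ)
    (h : ℝ → ℝ) (hh : StrictMonoOn h (Set.Icc (0:ℝ) 1))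
    (u : M → ℕ → ℝ)
    (S : Finset Θ) (hScard : S.card = q)
    (hmax : ∀ S' : Finset Θ, S'.card = q → W h s u m S' ≤ W h s u m S) :
    ∀ θ ∈ S, ∀ θ' : Θ, θ' ∉ S → m θ = m θ' → s θ' < s θ :=
  stmt_13_general s hs hs01 m q h hh u S hScard hmax
end
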